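/- The alliance polynomial of the cycle graph C_n on n ≥ 3 vertices is A(C_n;x) = n·x^{n−2} + n(n−2)·x^n + x^{n+2}, and this polynomial has unimodal coefficient sequence. -/

import Mathlib

/-!
Every vertex of `C_n` has degree `2`, so `δ_S(v) - δ_{S̄}(v) = 2 δ_S(v) - 2` and the index of a
connected set `S` is `-2`, `0` or `2` according as `S` is a single vertex, a proper subset with at
least two vertices (each of its vertices has a neighbour in `S`, and an endpoint has one outside),
or the whole cycle. The connected proper subsets are the arcs: `n` of each length `1, …, n - 1`.
Hence `A(C_n; x) = n x^{n-2} + n (n - 2) x^n + x^{n+2}`, whose coefficients `n ≤ n (n - 2) ≥ 1`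
form a unimodal sequence.
-/
open Finset Polynomial

section
open scoped Classical

noncomputable section

variable {V : Type*} [Fintype V]

/-- Number of neighbors of `v` inside `S` (as an integer). -/
def degIn (G : SimpleGraph V) (S : Finset V) (v : V) : ℤ :=
  ((S.filter (fun u => G.Adj v u)).card : ℤ)

/-- Number of neighbors of `v` outside `S` (as an integer). -/
def degOut (G : SimpleGraph V) (S : Finset V) (v : V) : ℤ :=
  ((Sᶜ.filter (fun u => G.Adj v u)).card : ℤ)

/-- The exact index of alliance of `S`. -/
def exactIndex (G : SimpleGraph V) (S : Finset V) : ℤ :=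
  if h : S.Nonempty then S.inf' h (fun v => degIn G S v - degOut G S v) else 0

/-- Nonempty vertex subsets inducing a connected subgraph. -/
def goodSets (G : SimpleGraph V) : Finset (Finset V) :=
  Finset.univ.filter (fun S => S.Nonempty ∧ (G.induce (S : Set V)).Connected)

/-- The alliance polynomial. -/
def alliancePoly (G : SimpleGraph V) : Polynomial ℤ :=
  ∑ S ∈ goodSets G, X ^ (((Fintype.card V : ℤ) + exactIndex G S).toNat)

/-- `A_k(Γ)`: number of connected exact defensive `k`-alliances. -/
def allianceCount (G : SimpleGraph V) (k : ℤ) : ℕ :=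
  ((goodSets G).filter (fun S => exactIndex G S = k)).card

end

end

open SimpleGraph

lemma SimpleGraph.Preconnected.exists_adj_mem_notMem {V : Type*} {G : SimpleGraph V}
    (hG : G.Preconnected) {s : Set V} {x y : V} (hx : x ∈ s) (hy : y ∉ s) :
    ∃ a ∈ s, ∃ b ∉ s, G.Adj a b := by
  obtain ⟨p⟩ := hG x y
  obtain ⟨d, -, hd, hd'⟩ := p.exists_boundary_dart s hx hy
  exact ⟨_, hd, _, hd', d.adj⟩

lemma Polynomial.trinomial_sort_support_map_coeff {R : Type*} [Semiring R] {k m l : ℕ}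
    {u v w : R} (hkm : k < m) (hml : m < l) (hu : u ≠ 0) (hv : v ≠ 0) (hw : w ≠ 0) :
    ((trinomial k m l u v w).support.sort (· ≤ ·)).map (trinomial k m l u v w).coeff
      = [u, v, w] := by
  have hsort : ({k, m, l} : Finset ℕ).sort (· ≤ ·) = [k, m, l] := by
    rw [Finset.sort_insert (· ≤ ·) ?_ ?_, Finset.sort_insert (· ≤ ·) ?_ ?_,
      Finset.sort_singleton] <;>
    simp only [Finset.mem_insert, Finset.mem_singleton, forall_eq_or_imp, forall_eq, not_or] <;>
    omega
  rw [trinomial_support hkm hml hu hv hw, hsort, List.map_cons, List.map_cons, List.map_cons,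
    List.map_nil, trinomial_trailing_coeff' hkm hml, trinomial_middle_coeff hkm hml,
    trinomial_leading_coeff' hkm hml]

lemma List.unimodal_triple_of_le_middle {α : Type*} [Preorder α] {a b c : α} (d : α)
    (hab : a ≤ b) (hcb : c ≤ b) :
    ∃ k : ℕ, (∀ i j : ℕ, i ≤ j → j ≤ k → [a, b, c].getD i d ≤ [a, b, c].getD j d) ∧
      (∀ i j : ℕ, k ≤ i → i ≤ j → j < 3 → [a, b, c].getD j d ≤ [a, b, c].getD i d) := by
  refine ⟨1, fun i j hij hj => ?_, fun i j hi hij hj => ?_⟩ <;>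
    interval_cases j <;> interval_cases i <;> simp [hab, hcb]

section ExactIndex

variable {V : Type*} {G : SimpleGraph V}

lemma one_le_degIn {S : Finset V} {v u : V} (hu : u ∈ S) (hvu : G.Adj v u) :
    1 ≤ degIn G S v := by
  classical
  unfold degIn
  exact_mod_cast Finset.card_pos.mpr ⟨u, Finset.mem_filter.mpr ⟨hu, hvu⟩⟩

variable [Fintype V]

lemma mem_goodSets {S : Finset V} :
    S ∈ goodSets G ↔ S.Nonempty ∧ (G.induce (S : Set V)).Connected := by
  simp [goodSets]

lemma exactIndex_of_nonempty {S : Finset V} (hS : S.Nonempty) :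
    exactIndex G S = S.inf' hS fun v => degIn G S v - degOut G S v :=
  dif_pos hS

lemma one_le_degOut {S : Finset V} {v u : V} (hu : u ∉ S) (hvu : G.Adj v u) :
    1 ≤ degOut G S v := by
  classical
  unfold degOut
  exact_mod_cast Finset.card_pos.mpr ⟨u, Finset.mem_filter.mpr ⟨Finset.mem_compl.mpr hu, hvu⟩⟩

lemma degIn_add_degOut [DecidableRel G.Adj] (S : Finset V) (v : V) :
    degIn G S v + degOut G S v = G.degree v := by
  classical
  rw [← card_neighborFinset_eq_degree,
    ← Finset.card_filter_add_card_filter_not (s := G.neighborFinset v) (· ∈ S)]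
  unfold degIn degOut
  push_cast
  congr 3 <;> ext u <;> simp [and_comm]

variable {d : ℕ} [DecidableRel G.Adj]

lemma degIn_sub_degOut (hG : G.IsRegularOfDegree d) (S : Finset V) (v : V) :
    degIn G S v - degOut G S v = 2 * degIn G S v - d := by
  have := degIn_add_degOut (G := G) S v
  rw [hG v] at this
  linarith

lemma exactIndex_singleton (hG : G.IsRegularOfDegree d) (v : V) :
    exactIndex G {v} = -d := by
  have hv : degIn G {v} v = 0 := by simp [degIn]
  rw [exactIndex_of_nonempty (Finset.singleton_nonempty v), Finset.inf'_singleton,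
    degIn_sub_degOut hG, hv]
  ring

lemma exactIndex_univ [Nonempty V] (hG : G.IsRegularOfDegree d) :
    exactIndex G Finset.univ = d := by
  have hv (v : V) : degIn G Finset.univ v - degOut G Finset.univ v = d := by
    have hout : degOut G Finset.univ v = 0 := by simp [degOut]
    have := degIn_add_degOut (G := G) Finset.univ v
    rw [hG v] at this
    linarith
  simp_rw [exactIndex_of_nonempty Finset.univ_nonempty, hv, Finset.inf'_const]

lemma exactIndex_eq_zero (hG : G.IsRegularOfDegree 2) (hconn : G.Connected) {S : Finset V}
    (hS : (G.induce (S : Set V)).Connected) (hSnt : S.Nontrivial) (hSu : S ≠ Finset.univ) :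
    exactIndex G S = 0 := by
  have hne := hSnt.nonempty
  rw [exactIndex_of_nonempty hne]
  apply le_antisymm
  · obtain ⟨y, hy⟩ : ∃ y, y ∉ S := by simpa [Finset.eq_univ_iff_forall] using hSu
    obtain ⟨x, hx⟩ := hne
    obtain ⟨a, ha, b, hb, hab⟩ :=
      hconn.preconnected.exists_adj_mem_notMem (s := (S : Set V)) hx hy
    have h1 := one_le_degOut hb hab
    have h2 := degIn_add_degOut (G := G) S a
    rw [hG a] at h2
    have := Finset.inf'_le (fun v => degIn G S v - degOut G S v) ha
    push_cast at h2
    linarith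
  · refine Finset.le_inf' hne _ fun v hv => ?_
    have : Nontrivial (S : Set V) := Finset.nontrivial_coe.mpr hSnt |>.coe_sort
    obtain ⟨⟨u, hu⟩, hvu⟩ := hS.preconnected.exists_adj_of_nontrivial ⟨v, hv⟩
    have h1 : 1 ≤ degIn G S v := one_le_degIn hu hvu
    have h2 := degIn_add_degOut (G := G) S v
    rw [hG v] at h2
    push_cast at h2
    linarith

end ExactIndex

section CycleGraph

open scoped Fin.CommRing Fin.NatCast

variable {n : ℕ}

def arc (i : Fin n) (s : ℕ) : Finset (Fin n) :=
  Finset.univ.filter fun v => (v - i).val < s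

lemma mem_arc {i v : Fin n} {s : ℕ} : v ∈ arc i s ↔ (v - i).val < s := by
  simp [arc]

lemma arc_eq_univ (i : Fin n) {s : ℕ} (hs : n ≤ s) : arc i s = Finset.univ := by
  ext v
  simpa [mem_arc] using (v - i).isLt.trans_le hs

variable [NeZero n]

lemma cycleGraph_adj_iff (hn : 2 ≤ n) {u v : Fin n} :
    (cycleGraph n).Adj u v ↔ v = u - 1 ∨ v = u + 1 := by
  obtain ⟨m, rfl⟩ : ∃ m, n = m + 2 := ⟨n - 2, by omega⟩
  rw [← mem_neighborSet, cycleGraph_neighborSet, Set.mem_insert_iff, Set.mem_singleton_iff]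

lemma cycleGraph_isRegularOfDegree_two (hn : 3 ≤ n) : (cycleGraph n).IsRegularOfDegree 2 := by
  obtain ⟨m, rfl⟩ : ∃ m, n = m + 3 := ⟨n - 3, by omega⟩
  exact fun _ => cycleGraph_degree_three_le

lemma cycleGraph_connected_of_neZero : (cycleGraph n).Connected := by
  obtain ⟨m, rfl⟩ : ∃ m, n = m + 1 := Nat.exists_eq_succ_of_ne_zero (NeZero.ne n)
  exact cycleGraph_connected

lemma Fin.add_val_sub (i v : Fin n) : i + ((v - i).val : Fin n) = v := by
  simp

lemma Fin.val_add_natCast_sub (i : Fin n) {t : ℕ} (ht : t < n) :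
    (i + (t : Fin n) - i).val = t := by
  simp [Nat.mod_eq_of_lt ht]

lemma Fin.add_natCast_pred (i : Fin n) : i + ((n - 1 : ℕ) : Fin n) = i - 1 := by
  rw [Nat.cast_sub NeZero.one_le, Fin.natCast_self, Nat.cast_one, zero_sub, ← sub_eq_add_neg]

lemma add_natCast_mem_arc_iff {i : Fin n} {s t : ℕ} (ht : t < n) :
    i + (t : Fin n) ∈ arc i s ↔ t < s := by
  rw [mem_arc, Fin.val_add_natCast_sub i ht]

lemma self_mem_arc (i : Fin n) {s : ℕ} (hs : 1 ≤ s) : i ∈ arc i s := by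
  simpa using (add_natCast_mem_arc_iff (i := i) (s := s) (t := 0) (NeZero.pos n)).mpr hs

lemma sub_one_mem_arc {i v : Fin n} {s : ℕ} (hv : v ∈ arc i s) (hvi : v ≠ i) :
    v - 1 ∈ arc i s := by
  rw [mem_arc] at hv ⊢
  rw [sub_right_comm, Fin.val_sub_one_of_ne_zero (sub_ne_zero.mpr hvi)]
  omega

lemma sub_one_notMem_arc (i : Fin n) {s : ℕ} (hs : s < n) : i - 1 ∉ arc i s := by
  rw [← Fin.add_natCast_pred, add_natCast_mem_arc_iff (by omega)]
  omega

lemma card_arc (i : Fin n) {s : ℕ} (hs : s ≤ n) : (arc i s).card = s := by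
  refine (Finset.card_nbij' (fun v => (v - i).val) (fun t => i + (t : Fin n)) ?_ ?_ ?_ ?_).trans
    (Finset.card_range s)
  · intro v hv
    simpa using mem_arc.mp hv
  · intro t ht
    simp only [Finset.coe_range, Set.mem_Iio] at ht
    exact (add_natCast_mem_arc_iff (by omega)).mpr ht
  · intro v _
    exact Fin.add_val_sub i v
  · intro t ht
    simp only [Finset.coe_range, Set.mem_Iio] at ht
    exact Fin.val_add_natCast_sub i (by omega)

lemma arc_connected (hn : 2 ≤ n) (i : Fin n) {s : ℕ} (hs : 1 ≤ s) (hsn : s ≤ n) :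
    ((cycleGraph n).induce (arc i s : Set (Fin n))).Connected := by
  have hmem {t : ℕ} (ht : t < s) : i + (t : Fin n) ∈ (arc i s : Set (Fin n)) :=
    (add_natCast_mem_arc_iff (by omega)).mpr ht
  have hreach (t : ℕ) (ht : t < s) :
      ((cycleGraph n).induce (arc i s : Set (Fin n))).Reachable
        ⟨i + (0 : ℕ), hmem (by omega)⟩ ⟨i + (t : ℕ), hmem ht⟩ := by
    induction t with
    | zero => rfl
    | succ t ih =>
      refine (ih (by omega)).trans (Adj.reachable ?_)
      simp only [comap_adj, Function.Embedding.subtype_apply, cycleGraph_adj_iff hn]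
      right
      push_cast
      ring
  rw [connected_iff_exists_forall_reachable]
  refine ⟨⟨i + (0 : ℕ), hmem (by omega)⟩, fun ⟨v, hv⟩ => ?_⟩
  convert hreach _ (mem_arc.mp hv)
  exact (Fin.add_val_sub i v).symm

lemma eq_sub_one_or_eq_add_of_adj_arc (hn : 2 ≤ n) {i a b : Fin n} {s : ℕ} (hsn : s < n)
    (ha : a ∈ arc i s) (hb : b ∉ arc i s) (hab : (cycleGraph n).Adj a b) :
    b = i - 1 ∨ b = i + (s : Fin n) := by
  set t := (a - i).val
  have hts : t < s := mem_arc.mp ha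
  have ha' : a = i + (t : Fin n) := (Fin.add_val_sub i a).symm
  rcases (cycleGraph_adj_iff hn).mp hab with rfl | rfl
  · rcases Nat.eq_zero_or_pos t with ht0 | ht0
    · left
      rw [ha', ht0]
      simp
    · refine absurd ?_ hb
      have : a - 1 = i + ((t - 1 : ℕ) : Fin n) := by
        rw [ha', Nat.cast_sub ht0, Nat.cast_one]
        ring
      rw [this, add_natCast_mem_arc_iff (by omega)]
      omega
  · by_cases hts' : t + 1 < s
    · refine absurd ?_ hb
      have : a + 1 = i + ((t + 1 : ℕ) : Fin n) := by
        rw [ha']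
        push_cast
        ring
      rwa [this, add_natCast_mem_arc_iff (by omega)]
    · right
      rw [ha', show s = t + 1 by omega]
      push_cast
      ring

lemma exists_mem_sub_one_notMem {S : Finset (Fin n)} (hne : S.Nonempty)
    (hSu : S ≠ Finset.univ) : ∃ i ∈ S, i - 1 ∉ S := by
  by_contra! hclosed
  obtain ⟨x, hx⟩ := hne
  have hsub (t : ℕ) : x - (t : Fin n) ∈ S := by
    induction t with
    | zero => simpa using hx
    | succ t ih => simpa [sub_sub] using hclosed _ ih
  exact hSu (Finset.eq_univ_of_forall fun v => by simpa using hsub (x - v).val)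

/-- `S` is the arc from some `i ∈ S` with `i - 1 ∉ S` up to the first vertex after `i` missing
from `S`; a connected `S` cannot leave this arc, since both vertices next to it are not in `S`. -/
lemma exists_eq_arc (hn : 2 ≤ n) {S : Finset (Fin n)}
    (hS : ((cycleGraph n).induce (S : Set (Fin n))).Connected) (hne : S.Nonempty)
    (hSu : S ≠ Finset.univ) :
    ∃ i, ∃ s, 1 ≤ s ∧ s < n ∧ S = arc i s := by
  obtain ⟨i, hi, hi1⟩ := exists_mem_sub_one_notMem hne hSu
  have hgap : ∃ t : ℕ, i + (t : Fin n) ∉ S := ⟨n - 1, by rwa [Fin.add_natCast_pred]⟩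
  set s := Nat.find hgap
  have hs1 : 1 ≤ s := (Nat.find_pos hgap).mpr (by simpa using hi)
  have hsn : s < n :=
    (Nat.find_min' hgap (by rwa [Fin.add_natCast_pred] : i + ((n - 1 : ℕ) : Fin n) ∉ S)).trans_lt
      (by omega)
  have harc : arc i s ⊆ S := fun v hv => by
    simpa [Fin.add_val_sub] using Nat.find_min hgap (mem_arc.mp hv)
  refine ⟨i, s, hs1, hsn, Finset.Subset.antisymm (fun y hy => ?_) harc⟩
  by_contra hy'
  obtain ⟨⟨a, haS⟩, ha, ⟨b, hbS⟩, hb, hab⟩ :=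
    hS.preconnected.exists_adj_mem_notMem (s := {z | z.val ∈ arc i s})
      (x := ⟨i, hi⟩) (y := ⟨y, hy⟩) (self_mem_arc i hs1) hy'
  rcases eq_sub_one_or_eq_add_of_adj_arc hn hsn ha hb hab with rfl | rfl
  · exact hi1 hbS
  · exact Nat.find_spec hgap hbS

lemma arc_injOn :
    Set.InjOn (fun p : Fin n × ℕ => arc p.1 p.2)
      ((Finset.univ ×ˢ Finset.Ico 1 n : Finset (Fin n × ℕ)) : Set (Fin n × ℕ)) := by
  rintro ⟨i, s⟩ hp ⟨i', s'⟩ hp' (h : arc i s = arc i' s')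
  simp only [Finset.coe_product, Finset.coe_univ, Finset.coe_Ico, Set.mem_prod, Set.mem_univ,
    Set.mem_Ico, true_and] at hp hp'
  obtain rfl : s = s' := by
    rw [← card_arc i hp.2.le, ← card_arc i' hp'.2.le, h]
  by_contra hne
  have hii' : i ≠ i' := fun hii' => hne (by rw [hii'])
  have hmem := sub_one_mem_arc (h ▸ self_mem_arc i hp.1) hii'
  exact sub_one_notMem_arc i hp.2 (h ▸ hmem)

lemma goodSets_cycleGraph (hn : 2 ≤ n) :
    goodSets (cycleGraph n) =
      insert Finset.univ ((Finset.univ ×ˢ Finset.Ico 1 n).image fun p => arc p.1 p.2) := by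
  ext S
  simp only [mem_goodSets, Finset.mem_insert, Finset.mem_image, Finset.mem_product,
    Finset.mem_univ, Finset.mem_Ico, true_and, Prod.exists]
  constructor
  · rintro ⟨hne, hS⟩
    by_cases hSu : S = Finset.univ
    · exact Or.inl hSu
    · obtain ⟨i, s, hs1, hsn, rfl⟩ := exists_eq_arc hn hS hne hSu
      exact Or.inr ⟨i, s, ⟨hs1, hsn⟩, rfl⟩
  · rintro (rfl | ⟨i, s, ⟨hs1, hsn⟩, rfl⟩)
    · rw [← arc_eq_univ 0 le_rfl]
      exact ⟨⟨0, self_mem_arc 0 NeZero.one_le⟩, arc_connected hn 0 NeZero.one_le le_rfl⟩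
    · exact ⟨⟨i, self_mem_arc i hs1⟩, arc_connected hn i hs1 hsn.le⟩

lemma exactIndex_arc (hn : 3 ≤ n) (i : Fin n) {s : ℕ} (hs1 : 1 ≤ s) (hsn : s < n) :
    exactIndex (cycleGraph n) (arc i s) = if s = 1 then -2 else 0 := by
  have hcard := card_arc i hsn.le
  have hG := cycleGraph_isRegularOfDegree_two hn
  split_ifs with hs
  · obtain ⟨v, hv⟩ := Finset.card_eq_one.mp (hcard.trans hs)
    rw [hv, exactIndex_singleton hG]
    rfl
  · refine exactIndex_eq_zero hG cycleGraph_connected_of_neZero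
      (arc_connected (by omega) i hs1 hsn.le) (Finset.one_lt_card_iff_nontrivial.mp (by omega))
      fun h => ?_
    rw [h, Finset.card_univ, Fintype.card_fin] at hcard
    omega

lemma alliancePoly_cycleGraph_eq_trinomial (hn : 3 ≤ n) :
    alliancePoly (cycleGraph n) = trinomial (n - 2) n (n + 2) (n : ℤ) (n * (n - 2)) 1 := by
  have hexp (p : Fin n × ℕ) (hp : p ∈ Finset.univ ×ˢ Finset.Ico 1 n) :
      (X : ℤ[X]) ^ ((Fintype.card (Fin n) : ℤ) + exactIndex (cycleGraph n) (arc p.1 p.2)).toNat =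
        if p.2 = 1 then X ^ (n - 2) else X ^ n := by
    simp only [Finset.mem_product, Finset.mem_univ, Finset.mem_Ico, true_and] at hp
    rw [Fintype.card_fin, exactIndex_arc hn p.1 hp.1 hp.2]
    split_ifs
    · congr 1
      omega
    · simp
  have hnotMem :
      Finset.univ ∉ (Finset.univ ×ˢ Finset.Ico 1 n).image fun p : Fin n × ℕ => arc p.1 p.2 := by
    simp only [Finset.mem_image, Finset.mem_product, Finset.mem_univ, Finset.mem_Ico, true_and,
      Prod.exists, not_exists, not_and]
    intro i s hs h
    have := card_arc i hs.2.le
    rw [h, Finset.card_univ, Fintype.card_fin] at this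
    omega
  have hlong : ∑ s ∈ Finset.Ico (1 + 1) n, (if s = 1 then (X : ℤ[X]) ^ (n - 2) else X ^ n) =
      (n - 2) • X ^ n := by
    rw [Finset.sum_congr rfl fun s hs => if_neg (by simp only [Finset.mem_Ico] at hs; omega),
      Finset.sum_const, Nat.card_Ico]
  have htop : ((n : ℤ) + 2).toNat = n + 2 := by omega
  rw [alliancePoly, goodSets_cycleGraph (by omega), Finset.sum_insert hnotMem,
    Finset.sum_image arc_injOn, Finset.sum_congr rfl hexp, Finset.sum_product,
    exactIndex_univ (cycleGraph_isRegularOfDegree_two hn)]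
  simp only [Finset.sum_eq_sum_Ico_succ_bot (by omega : 1 < n), if_pos, Fintype.card_fin,
    Nat.cast_ofNat, hlong]
  rw [Finset.sum_const, Finset.card_univ, Fintype.card_fin, htop, trinomial_def]
  simp only [nsmul_eq_mul, Nat.cast_sub (by omega : 2 ≤ n), map_one, C_mul, map_sub, map_natCast,
    map_ofNat, Nat.cast_ofNat]
  ring

end CycleGraph

/-- the alliance polynomial of the cycle graph `C_n`, `n ≥ 3`,
and its unimodality (the sequence of its nonzero coefficients, listed by
increasing exponent, is unimodal). -/
theorem alliancePoly_cycleGraph (n : ℕ) (hn : 3 ≤ n) :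
    alliancePoly (SimpleGraph.cycleGraph n)
      = C (n : ℤ) * X ^ (n - 2) + C ((n : ℤ) * ((n : ℤ) - 2)) * X ^ n + X ^ (n + 2) ∧
    (∃ k : ℕ,
      (∀ i j : ℕ, i ≤ j → j ≤ k →
        (((alliancePoly (SimpleGraph.cycleGraph n)).support.sort (· ≤ ·)).map
            (alliancePoly (SimpleGraph.cycleGraph n)).coeff).getD i 0
          ≤ (((alliancePoly (SimpleGraph.cycleGraph n)).support.sort (· ≤ ·)).map
              (alliancePoly (SimpleGraph.cycleGraph n)).coeff).getD j 0) ∧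
      (∀ i j : ℕ, k ≤ i → i ≤ j →
        j < (alliancePoly (SimpleGraph.cycleGraph n)).support.card →
        (((alliancePoly (SimpleGraph.cycleGraph n)).support.sort (· ≤ ·)).map
            (alliancePoly (SimpleGraph.cycleGraph n)).coeff).getD j 0
          ≤ (((alliancePoly (SimpleGraph.cycleGraph n)).support.sort (· ≤ ·)).map
              (alliancePoly (SimpleGraph.cycleGraph n)).coeff).getD i 0)) := by
  have : NeZero n := ⟨by omega⟩
  have hn' : (3 : ℤ) ≤ n := by exact_mod_cast hn
  have hkm : n - 2 < n := by omega
  have hml : n < n + 2 := by omega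
  have hu : (n : ℤ) ≠ 0 := by omega
  have hv : (n : ℤ) * (n - 2) ≠ 0 := mul_ne_zero hu (by omega)
  rw [alliancePoly_cycleGraph_eq_trinomial hn]
  refine ⟨by rw [trinomial_def, map_one, one_mul], ?_⟩
  rw [trinomial_sort_support_map_coeff hkm hml hu hv one_ne_zero,
    trinomial_support hkm hml hu hv one_ne_zero,
    Finset.card_eq_three.mpr ⟨_, _, _, by omega, by omega, by omega, rfl⟩]
  exact List.unimodal_triple_of_le_middle 0 (by nlinarith) (by nlinarith)
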